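/- Let $\sigma \in (5/3,2)$ and for $z \in \mathbb{C}$ away from poles define $Q(z) = \sum_{j=0}^2 \frac{c_j\,\Gamma(2 + j/3 - \sigma)}{\sigma - j/3 - 1}\cdot\frac{\Gamma(\sigma - 1 - j/3 - z)}{\Gamma(\sigma - 1 - z)}$ with $c_0 = c_2 = 1$, $c_1 = 2$. Then for $j \in \{1,2\}$ and $n \in \mathbb{N}_0$, the residue of $Q$ at the simple pole $z_{j,n} = \sigma - 1 - j/3 + n$ equals $-\frac{c_j\,\Gamma(2+j/3-\sigma)}{\pi(\sigma - j/3 - 1)}\cdot\frac{\Gamma(1 - j/3 + n)}{\Gamma(1+n)}\,\sin\!\big(\tfrac{\pi j}{3}\big)$, and this residue is strictly negative. -/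

import Mathlib

open Set Filter

/-- The coefficients `c₀ = c₂ = 1`, `c₁ = 2`. -/
noncomputable def cCoef : ℕ → ℝ := fun j => if j = 1 then 2 else 1

/-- `Q(z) = ∑_{j=0}^2 (c_j Γ(2+j/3-σ)/(σ-j/3-1)) · Γ(σ-1-j/3-z)/Γ(σ-1-z)`. -/
noncomputable def Qfun (σ : ℝ) (z : ℂ) : ℂ :=
  ∑ j ∈ Finset.range 3,
    ((cCoef j * Real.Gamma (2 + (j : ℝ) / 3 - σ) / (σ - (j : ℝ) / 3 - 1) : ℝ) : ℂ)
      * (Complex.Gamma ((σ : ℂ) - 1 - (j : ℝ) / 3 - z) / Complex.Gamma ((σ : ℂ) - 1 - z))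

/-!
Near `z₀ = σ - 1 - j/3 + n` the denominator `Γ(σ - 1 - z)` stays regular, since `σ - 1 - z₀ = j/3 - n`
is not an integer, and of the three numerators `Γ(σ - 1 - k/3 - z)` only the one with `k = j` has a
pole, namely the pole of `Γ` at `-n`, with residue `(-1)ⁿ/n!`. So the residue of `Q` is
`-A_j (-1)ⁿ / (n! Γ(j/3 - n))`, where `A_j = c_j Γ(2 + j/3 - σ)/(σ - j/3 - 1)` (`qCoef σ j`) is the
coefficient of the `j`-th summand. The reflection formula
`Γ(j/3 - n) Γ(1 - j/3 + n) = π / sin(π(j/3 - n))` turns this into the stated closed form, each of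
whose factors has a known sign when `σ ∈ (5/3, 2)`.
-/

open Topology Nat

namespace Complex

theorem tendsto_add_nat_mul_Gamma_nhdsNE_neg_nat (n : ℕ) :
    Tendsto (fun w : ℂ => (w + n) * Gamma w) (𝓝[≠] (-n)) (𝓝 ((-1) ^ n / n !)) := by
  induction n with
  | zero => simpa using tendsto_self_mul_Gamma_nhds_zero
  | succ n ih =>
    have hne : (-(n + 1 : ℕ) : ℂ) ≠ 0 := neg_ne_zero.2 (Nat.cast_ne_zero.2 n.succ_ne_zero)
    have hshift : Tendsto (fun w : ℂ => w + 1) (𝓝[≠] (-(n + 1 : ℕ) : ℂ)) (𝓝[≠] (-n)) := by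
      have h := ((hasDerivAt_id' (-(n + 1 : ℕ) : ℂ)).add_const 1).tendsto_nhdsNE one_ne_zero
      rwa [show (-(n + 1 : ℕ) : ℂ) + 1 = -n by push_cast; ring] at h
    have hlim := (ih.comp hshift).mul ((tendsto_inv₀ hne).mono_left nhdsWithin_le_nhds)
    -- `Γ(w) = Γ(w + 1) / w` moves the pole at `-(n + 1)` to the pole at `-n`
    have hrec : ∀ᶠ w in 𝓝[≠] (-(n + 1 : ℕ) : ℂ),
        ((w + 1 + n) * Gamma (w + 1)) * w⁻¹ = (w + (n + 1 : ℕ)) * Gamma w := by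
      filter_upwards [(eventually_ne_nhds hne).filter_mono nhdsWithin_le_nhds] with w hw
      rw [Gamma_add_one w hw]
      field_simp
      push_cast; ring
    convert hlim.congr' hrec using 2
    rw [factorial_succ, pow_succ]
    push_cast
    have : (n : ℂ) + 1 ≠ 0 := Nat.cast_add_one_ne_zero n
    field_simp

theorem continuousAt_Gamma_const_sub {a z₀ : ℂ} (h : ∀ m : ℕ, a - z₀ ≠ -m) :
    ContinuousAt (fun z => Gamma (a - z)) z₀ :=
  (differentiableAt_Gamma _ h).continuousAt.comp (continuousAt_const.sub continuousAt_id)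

theorem tendsto_sub_mul_Gamma_div_Gamma_of_regular {a b z₀ : ℂ} (ha : ∀ m : ℕ, a - z₀ ≠ -m)
    (hb : ∀ m : ℕ, b - z₀ ≠ -m) :
    Tendsto (fun z => (z - z₀) * (Gamma (a - z) / Gamma (b - z))) (𝓝[≠] z₀) (𝓝 0) := by
  have hf : ContinuousAt (fun z => (z - z₀) * (Gamma (a - z) / Gamma (b - z))) z₀ :=
    (continuous_sub_right z₀).continuousAt.mul
    ((continuousAt_Gamma_const_sub ha).div (continuousAt_Gamma_const_sub hb) (Gamma_ne_zero hb))
  simpa using hf.tendsto.mono_left nhdsWithin_le_nhds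

theorem tendsto_sub_mul_Gamma_div_Gamma_of_pole {b z₀ : ℂ} (n : ℕ) (hb : ∀ m : ℕ, b - z₀ ≠ -m) :
    Tendsto (fun z => (z - z₀) * (Gamma (z₀ - n - z) / Gamma (b - z))) (𝓝[≠] z₀)
      (𝓝 (-((-1) ^ n / n !) / Gamma (b - z₀))) := by
  have hmap : Tendsto (fun z => z₀ - n - z) (𝓝[≠] z₀) (𝓝[≠] (-n)) := by
    have h := ((hasDerivAt_id' z₀).const_sub (z₀ - n)).tendsto_nhdsNE (neg_ne_zero.2 one_ne_zero)
    rwa [sub_sub_cancel_left] at h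
  have hlim := ((tendsto_add_nat_mul_Gamma_nhdsNE_neg_nat n).comp hmap).neg.div
    ((continuousAt_Gamma_const_sub hb).tendsto.mono_left nhdsWithin_le_nhds) (Gamma_ne_zero hb)
  refine hlim.congr fun z => ?_
  simp only [Pi.div_apply, Function.comp_apply]
  ring

end Complex

theorem sub_div_three_sub_nat_ne_neg_nat {j k : ℕ} (hj : j < 3) (hk : k < 3) (hkj : k ≠ j)
    (n m : ℕ) : ((j : ℂ) - k) / 3 - n ≠ -m := by
  intro h
  have hcast : ((j - k : ℤ) : ℂ) = ((3 * (n - m) : ℤ) : ℂ) := by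
    push_cast
    linear_combination 3 * h
  have := Int.cast_injective hcast
  omega

open Real in
theorem Real.inv_Gamma_sub_nat {x : ℝ} (hx : sin (π * x) ≠ 0) (n : ℕ) :
    (Gamma (x - n))⁻¹ = (-1) ^ n * sin (π * x) * Gamma (1 - x + n) / π := by
  have hs : (-1) ^ n * sin (π * x) ≠ 0 := mul_ne_zero (pow_ne_zero _ (by norm_num)) hx
  have hrefl := Gamma_mul_Gamma_one_sub (x - n)
  rw [show π * (x - n) = π * x - n * π by ring, sin_sub_nat_mul_pi,
    show 1 - (x - n) = 1 - x + n by ring, eq_div_iff hs] at hrefl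
  have hprod : Gamma (x - n) * Gamma (1 - x + n) ≠ 0 :=
    left_ne_zero_of_mul (by rw [hrefl]; exact pi_ne_zero)
  -- keeps the `π` inside `sin` out of reach of the rewrite below
  set s := (-1) ^ n * sin (π * x)
  rw [← hrefl]
  field_simp [left_ne_zero_of_mul hprod, right_ne_zero_of_mul hprod]

noncomputable def qCoef (σ : ℝ) (j : ℕ) : ℝ :=
  cCoef j * Real.Gamma (2 + (j : ℝ) / 3 - σ) / (σ - (j : ℝ) / 3 - 1)

noncomputable def qResidue (σ : ℝ) (j n : ℕ) : ℝ :=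
  -(cCoef j * Real.Gamma (2 + (j : ℝ) / 3 - σ) / (Real.pi * (σ - (j : ℝ) / 3 - 1)))
    * (Real.Gamma (1 - (j : ℝ) / 3 + n) / Real.Gamma (1 + n)) * Real.sin (Real.pi * j / 3)

theorem sin_pi_mul_div_three_pos {j : ℕ} (hj0 : 0 < j) (hj3 : j < 3) :
    0 < Real.sin (Real.pi * j / 3) := by
  apply Real.sin_pos_of_pos_of_lt_pi (by positivity)
  have : (j : ℝ) < 3 := by exact_mod_cast hj3
  nlinarith [Real.pi_pos]

theorem qResidue_eq {j : ℕ} (σ : ℝ) (hj0 : 0 < j) (hj3 : j < 3) (n : ℕ) :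
    qResidue σ j n = qCoef σ j * (-((-1) ^ n / n !) / Real.Gamma (j / 3 - n)) := by
  have hsin : Real.sin (Real.pi * (j / 3)) ≠ 0 := by
    rw [← mul_div_assoc]
    exact (sin_pi_mul_div_three_pos hj0 hj3).ne'
  have hΓ : Real.Gamma (1 + n) = n ! := by
    rw [add_comm]
    exact_mod_cast Real.Gamma_nat_eq_factorial n
  rw [div_eq_mul_inv _ (Real.Gamma _), Real.inv_Gamma_sub_nat hsin, ← mul_div_assoc Real.pi,
    qResidue, qCoef, hΓ, ← div_div (cCoef j * _)]
  have hsq : ((-1 : ℝ) ^ n) ^ 2 = 1 := by rw [← pow_mul, pow_mul', neg_one_sq, one_pow]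
  linear_combination (cCoef j * Real.Gamma (2 + j / 3 - σ) * Real.Gamma (1 - j / 3 + n)
    * Real.sin (Real.pi * j / 3) / Real.pi / (σ - j / 3 - 1) / n !) * hsq

theorem qResidue_neg {σ : ℝ} (hσ : σ ∈ Ioo (5 / 3 : ℝ) 2) {j : ℕ} (hj0 : 0 < j) (hj3 : j < 3)
    (n : ℕ) : qResidue σ j n < 0 := by
  obtain ⟨hσ₁, hσ₂⟩ := hσ
  have hj : (j : ℝ) ≤ 2 := by exact_mod_cast Nat.lt_succ_iff.1 hj3
  have hc : 0 < cCoef j := by unfold cCoef; split <;> norm_num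
  have hΓ₁ : 0 < Real.Gamma (2 + (j : ℝ) / 3 - σ) :=
    Real.Gamma_pos_of_pos (by linarith [j.cast_nonneg (α := ℝ)])
  have hs : 0 < σ - (j : ℝ) / 3 - 1 := by linarith
  have hΓ₂ : 0 < Real.Gamma (1 - (j : ℝ) / 3 + n) :=
    Real.Gamma_pos_of_pos (by linarith [n.cast_nonneg (α := ℝ)])
  have hΓ₃ : 0 < Real.Gamma (1 + (n : ℝ)) := Real.Gamma_pos_of_pos (by positivity)
  rw [qResidue, neg_mul, neg_mul, neg_lt_zero]
  exact mul_pos (mul_pos (div_pos (mul_pos hc hΓ₁) (mul_pos Real.pi_pos hs)) (div_pos hΓ₂ hΓ₃))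
    (sin_pi_mul_div_three_pos hj0 hj3)

theorem tendsto_sub_mul_Qfun (σ : ℝ) {j : ℕ} (hj0 : 0 < j) (hj3 : j < 3) (n : ℕ) :
    Tendsto (fun z : ℂ => (z - ((σ - 1 - (j : ℝ) / 3 + n : ℝ) : ℂ)) * Qfun σ z)
      (𝓝[≠] ((σ - 1 - (j : ℝ) / 3 + n : ℝ) : ℂ)) (𝓝 (qResidue σ j n : ℂ)) := by
  set z₀ : ℂ := ((σ - 1 - (j : ℝ) / 3 + n : ℝ) : ℂ)
  have hshift (k : ℕ) : (σ : ℂ) - 1 - (k : ℝ) / 3 - z₀ = ((j : ℂ) - k) / 3 - n := by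
    simp only [z₀]; push_cast; ring
  have hden_eq : (σ : ℂ) - 1 - z₀ = ((j / 3 - n : ℝ) : ℂ) := by
    simp only [z₀]; push_cast; ring
  have hden (m : ℕ) : (σ : ℂ) - 1 - z₀ ≠ -m := by
    have h := sub_div_three_sub_nat_ne_neg_nat hj3 (by norm_num) hj0.ne n m
    rw [← hshift 0] at h
    simpa using h
  have hterm : ∀ k ∈ Finset.range 3, Tendsto (fun z => (qCoef σ k : ℂ) *
      ((z - z₀) * (Complex.Gamma ((σ : ℂ) - 1 - (k : ℝ) / 3 - z) / Complex.Gamma ((σ : ℂ) - 1 - z))))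
      (𝓝[≠] z₀)
      (𝓝 (if k = j then (qCoef σ j : ℂ) * (-((-1) ^ n / n !) / Complex.Gamma ((σ : ℂ) - 1 - z₀))
        else 0)) := by
    intro k hk
    split_ifs with hkj
    · subst hkj
      have hnum : (σ : ℂ) - 1 - (k : ℝ) / 3 = z₀ - n := by simp only [z₀]; push_cast; ring
      simp_rw [hnum]
      exact (Complex.tendsto_sub_mul_Gamma_div_Gamma_of_pole n hden).const_mul _
    · have hnum (m : ℕ) : (σ : ℂ) - 1 - (k : ℝ) / 3 - z₀ ≠ -m := by
        rw [hshift]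
        exact sub_div_three_sub_nat_ne_neg_nat hj3 (Finset.mem_range.1 hk) hkj n m
      simpa using (Complex.tendsto_sub_mul_Gamma_div_Gamma_of_regular hnum hden).const_mul
        (qCoef σ k : ℂ)
  have hsum := tendsto_finsetSum (Finset.range 3) hterm
  rw [Finset.sum_ite_eq', if_pos (Finset.mem_range.2 hj3), hden_eq, Complex.Gamma_ofReal] at hsum
  rw [qResidue_eq σ hj0 hj3 n]
  push_cast
  refine hsum.congr fun z => ?_
  rw [Qfun, Finset.mul_sum]
  exact Finset.sum_congr rfl fun k _ => by rw [qCoef]; ring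

/-- for `σ ∈ (5/3,2)`, `j ∈ {1,2}` and `n ∈ ℕ`, the residue of `Q` at the
simple pole `z_{j,n} = σ - 1 - j/3 + n` equals
`-(c_j Γ(2+j/3-σ)/(π(σ-j/3-1))) · (Γ(1-j/3+n)/Γ(1+n)) · sin(πj/3)`, and it is negative. -/
theorem stmt13 (σ : ℝ) (hσ : σ ∈ Ioo (5/3 : ℝ) 2) (j : ℕ) (hj : j = 1 ∨ j = 2) (n : ℕ) :
    Tendsto (fun z : ℂ => (z - ((σ - 1 - (j : ℝ) / 3 + n : ℝ) : ℂ)) * Qfun σ z)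
        (nhdsWithin ((σ - 1 - (j : ℝ) / 3 + n : ℝ) : ℂ) {((σ - 1 - (j : ℝ) / 3 + n : ℝ) : ℂ)}ᶜ)
        (nhds ((-(cCoef j * Real.Gamma (2 + (j : ℝ) / 3 - σ)
            / (Real.pi * (σ - (j : ℝ) / 3 - 1)))
          * (Real.Gamma (1 - (j : ℝ) / 3 + n) / Real.Gamma (1 + n))
          * Real.sin (Real.pi * j / 3) : ℝ) : ℂ)) ∧
    (-(cCoef j * Real.Gamma (2 + (j : ℝ) / 3 - σ) / (Real.pi * (σ - (j : ℝ) / 3 - 1)))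
        * (Real.Gamma (1 - (j : ℝ) / 3 + n) / Real.Gamma (1 + n))
        * Real.sin (Real.pi * j / 3) : ℝ) < 0 := by
  have hj0 : 0 < j := by omega
  have hj3 : j < 3 := by omega
  exact ⟨tendsto_sub_mul_Qfun σ hj0 hj3 n, qResidue_neg hσ hj0 hj3 n⟩
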